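/- For the 2D square lattice I of the paper (a unit square of side ℓ with four edge bars and two diagonal bars, all of axial stiffness EA, pin-jointed), the equivalent horizontal stiffness differs from that of lattice II (same lattice with the vertical transverse bar removed, K = 2EA/ℓ), even though every vertical slice of both lattices intersects bars with the same total effective area 3A in the x-direction. -/
import Mathlib


/-- The two 2D square unit-cell lattices of the paper.  Lattice I is a unit
square of side `ℓ` with four edge bars and two diagonal bars (all pin-jointed,
axial stiffness `EA/ℓ_e`); lattice II removes the vertical transverse (right)
bar.  The left side is fixed and the right side is given a uniform horizontal
displacement `u`, with the vertical displacements `y1, y2` of the right nodes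
free (equilibrium equations below, where `c = 1/(2√2)` arises from the
45° diagonals).  The horizontal force of lattice I defines its equivalent
stiffness `KI` via `F_I = KI * u`, while for lattice II the equivalent
stiffness is `KII = 2 E A / ℓ`.  Then `KI ≠ KII`, even though every vertical
slice of either lattice intersects bars of the same total effective area
`∑ A cos²θ_x = 3A` (two horizontal bars with `cos θ_x = 1`, two diagonals with
`cos θ_x = cos 45°`, and for lattice I the vertical bar with
`cos θ_x = cos 90°`). -/
theorem transverse_bar_changes_stiffness_but_not_effective_area
    (E A ℓ u y1 y2 KI KII c : ℝ)
    (hE : 0 < E) (hA : 0 < A) (hℓ : 0 < ℓ) (hu : u ≠ 0)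
    (hc : c = 1 / (2 * Real.sqrt 2))
    -- equilibrium of the free vertical displacements of the right nodes of lattice I
    (heq1 : (y2 - y1) + c * (u + y2) = 0)
    (heq2 : (y2 - y1) + c * (u - y1) = 0)
    -- horizontal force of lattice I defines KI
    (hKI : E * A / ℓ * (2 * u + c * ((u + y2) + (u - y1))) = KI * u)
    -- equivalent stiffness of lattice II (transverse bar removed)
    (hKII : KII = 2 * E * A / ℓ) :
    KI ≠ KII ∧
    A * Real.cos 0 ^ 2 + A * Real.cos 0 ^ 2
        + A * Real.cos (Real.pi / 4) ^ 2 + A * Real.cos (Real.pi / 4) ^ 2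
        + A * Real.cos (Real.pi / 2) ^ 2
      = A * Real.cos 0 ^ 2 + A * Real.cos 0 ^ 2
        + A * Real.cos (Real.pi / 4) ^ 2 + A * Real.cos (Real.pi / 4) ^ 2 ∧
    A * Real.cos 0 ^ 2 + A * Real.cos 0 ^ 2
        + A * Real.cos (Real.pi / 4) ^ 2 + A * Real.cos (Real.pi / 4) ^ 2
      = 3 * A := by
  have hs2 : (0:ℝ) < Real.sqrt 2 := Real.sqrt_pos.mpr (by norm_num)
  have hc0 : 0 < c := by rw [hc]; positivity
  -- from the two equilibrium equations: y1 = -y2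
  have h12 : y1 = -y2 := by
    have := sub_eq_zero.mpr (heq1.trans heq2.symm)
    have hcy : c * (y2 + y1) = 0 := by ring_nf; ring_nf at this; linarith
    have := (mul_eq_zero.mp hcy).resolve_left (ne_of_gt hc0)
    linarith
  have hy2 : (2 + c) * y2 = -(c * u) := by
    rw [h12] at heq1; nlinarith [heq1]
  refine ⟨?_, ?_, ?_⟩
  · intro h
    rw [h, hKII] at hKI
    have hEAℓ : (0:ℝ) < E * A / ℓ := by positivity
    -- hKI : E*A/ℓ * (2u + c*((u+y2)+(u-y1))) = 2*E*A/ℓ * u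
    have h2 : c * ((u + y2) + (u - y1)) = 0 := by
      have : E * A / ℓ * (c * ((u + y2) + (u - y1))) = 0 := by
        linear_combination hKI
      exact (mul_eq_zero.mp this).resolve_left (ne_of_gt hEAℓ)
    have h3 : u + y2 = 0 := by
      rw [h12] at h2
      have := (mul_eq_zero.mp h2).resolve_left (ne_of_gt hc0)
      linarith
    have : y2 = -u := by linarith
    rw [this] at hy2
    have : u = 0 := by nlinarith
    exact hu this
  · simp [Real.cos_pi_div_two]
  · have h4 : Real.cos (Real.pi / 4) = Real.sqrt 2 / 2 := Real.cos_pi_div_four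
    have hsq : Real.sqrt 2 ^ 2 = 2 := Real.sq_sqrt (by norm_num)
    rw [h4, Real.cos_zero]
    field_simp
    nlinarith [hsq]
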